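/- For every ρ ∈ ℰ̄¹ with ⟨ρ, α⟩ = 0, the set ℜ_ρ(ℰ̄) ∩ ℜ(ℰ) ∩ {e ∈ M̄ : α^∨(e) ≥ 0} is nonempty, where ℰ = 𝒢^∨ ⊆ N_ℚ is the dual cone of 𝒢 inside N_ℚ = Hom_ℤ(M,ℤ) ⊗ ℚ and elements of ℜ(ℰ) ⊆ M are viewed inside M̄. -/

import Mathlib

open scoped BigOperators

namespace RootSubgroups

/-- The natural pairing on `ℚⁿ`, identifying `N_ℚ` with the dual of `M_ℚ`. -/
def pairQ {n : ℕ} (q v : Fin n → ℚ) : ℚ := ∑ i, q i * v i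

/-- A vector of `M_ℚ = ℚⁿ` is a lattice point (lies in `M = ℤⁿ`) if all its
coordinates are integers. -/
def IsLatticePt {n : ℕ} (v : Fin n → ℚ) : Prop := ∀ i, ∃ z : ℤ, v i = (z : ℚ)

/-- The convex cone generated by a set `S ⊆ ℚⁿ`: all finite nonnegative
rational combinations of elements of `S`. -/
def coneHull {n : ℕ} (S : Set (Fin n → ℚ)) : Set (Fin n → ℚ) :=
  {x | ∃ (F : Finset (Fin n → ℚ)) (c : (Fin n → ℚ) → ℚ),
      (F : Set (Fin n → ℚ)) ⊆ S ∧ (∀ v, 0 ≤ c v) ∧ x = ∑ v ∈ F, c v • v}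

/-- A finitely generated convex cone: the cone generated by a finite set. -/
def IsFGCone {n : ℕ} (C : Set (Fin n → ℚ)) : Prop :=
  ∃ S : Finset (Fin n → ℚ), C = coneHull (S : Set (Fin n → ℚ))

/-- The dual cone `ℰ = 𝒢^∨ = {q : ⟨q, v⟩ ≥ 0 for all v ∈ 𝒢}`. -/
def dualCone {n : ℕ} (C : Set (Fin n → ℚ)) : Set (Fin n → ℚ) :=
  {q | ∀ v ∈ C, 0 ≤ pairQ q v}

/-- A face of the dual cone `ℰ = C^∨`: a subset of the form
`{q ∈ ℰ : ⟨q, v⟩ = 0}` for some `v ∈ C`. -/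
def IsFaceOfDual {n : ℕ} (C F : Set (Fin n → ℚ)) : Prop :=
  ∃ v ∈ C, F = {q ∈ dualCone C | pairQ q v = 0}

/-- The ray `ℚ_{≥0}·ρ` spanned by a vector `ρ`. -/
def raySet {n : ℕ} (ρ : Fin n → ℚ) : Set (Fin n → ℚ) :=
  {x | ∃ c : ℚ, 0 ≤ c ∧ x = c • ρ}

/-- A lattice vector is primitive if it is not a positive integer multiple
`k·q` (`k ≠ 1`) of a lattice vector `q`. -/
def IsPrimitive {n : ℕ} (ρ : Fin n → ℚ) : Prop :=
  IsLatticePt ρ ∧ ∀ (k : ℕ) (q : Fin n → ℚ), IsLatticePt q → ρ = (k : ℚ) • q → k = 1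

/-- `ℰ¹`: the set of primitive lattice vectors `ρ ∈ N` such that `ℚ_{≥0}·ρ` is
a ray (one-dimensional face) of the dual cone `ℰ = C^∨`. -/
def E1 {n : ℕ} (C : Set (Fin n → ℚ)) : Set (Fin n → ℚ) :=
  {ρ | IsPrimitive ρ ∧ IsFaceOfDual C (raySet ρ)}

/-- The Demazure roots of `ℰ = C^∨` at `ρ ∈ ℰ¹`:
`ℜ_ρ(ℰ) = {e ∈ M : ⟨ρ, e⟩ = −1 and ⟨ρ', e⟩ ≥ 0 for all ρ' ∈ ℰ¹ \ {ρ}}`. -/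
def DemRootsAt {n : ℕ} (C : Set (Fin n → ℚ)) (ρ : Fin n → ℚ) : Set (Fin n → ℚ) :=
  {e | IsLatticePt e ∧ pairQ ρ e = -1 ∧ ∀ ρ' ∈ E1 C, ρ' ≠ ρ → 0 ≤ pairQ ρ' e}

/-- The set `ℜ(ℰ)` of all Demazure roots of `ℰ = C^∨`. -/
def DemRoots {n : ℕ} (C : Set (Fin n → ℚ)) : Set (Fin n → ℚ) :=
  ⋃ ρ ∈ E1 C, DemRootsAt C ρ

/-- A face of the cone `C`: a subset of the form `{v ∈ C : ⟨q, v⟩ = 0}` for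
some `q` in the dual cone of `C`. -/
def IsFaceOfCone {n : ℕ} (C F : Set (Fin n → ℚ)) : Prop :=
  ∃ q ∈ dualCone C, F = {v ∈ C | pairQ q v = 0}

/-- A facet of the cone `C`: a face whose linear span has codimension one in
the linear span of `C`. -/
def IsFacetOfCone {n : ℕ} (C F : Set (Fin n → ℚ)) : Prop :=
  IsFaceOfCone C F ∧
    Module.finrank ℚ ↥(Submodule.span ℚ F) + 1 = Module.finrank ℚ ↥(Submodule.span ℚ C)

end RootSubgroups

namespace RootSubgroups

/-- The embedding of `M_ℚ = ℚⁿ` into `M̄_ℚ = ℚ^{n+1}`, where the last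
coordinate is the coefficient of the extra basis element `α`. -/
def emb {n : ℕ} (v : Fin n → ℚ) : Fin (n + 1) → ℚ := Fin.snoc v 0

/-- The extra basis element `α` of `M̄ = M ⊕ ℤα`. -/
def alphaVec (n : ℕ) : Fin (n + 1) → ℚ := Fin.snoc 0 1

/-- The involution `w(x) = x − α^∨(x)·α` of `M̄_ℚ`, where the homomorphism
`α^∨ : M̄ → ℤ` is represented by pairing with a lattice vector `ac ∈ N̄`. -/
def wmap {n : ℕ} (ac : Fin (n + 1) → ℚ) (x : Fin (n + 1) → ℚ) : Fin (n + 1) → ℚ :=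
  x - pairQ ac x • alphaVec n

/-- The cone `𝒢̄ ⊆ M̄_ℚ` generated by `𝒢 ∪ w(𝒢)`. -/
def barCone {n : ℕ} (ac : Fin (n + 1) → ℚ) (C : Set (Fin n → ℚ)) :
    Set (Fin (n + 1) → ℚ) :=
  coneHull (emb '' C ∪ wmap ac '' (emb '' C))

end RootSubgroups

namespace RootSubgroups

open Finset

variable {n : ℕ}

/-! ### Basic pairing lemmas -/

lemma pairQ_comm (q v : Fin n → ℚ) : pairQ q v = pairQ v q := by
  unfold pairQ; exact Finset.sum_congr rfl fun i _ => mul_comm _ _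

lemma pairQ_add_right (q x y : Fin n → ℚ) : pairQ q (x + y) = pairQ q x + pairQ q y := by
  unfold pairQ; rw [← Finset.sum_add_distrib]
  exact Finset.sum_congr rfl fun i _ => by simp [Pi.add_apply, mul_add]

lemma pairQ_smul_right (q : Fin n → ℚ) (c : ℚ) (x : Fin n → ℚ) :
    pairQ q (c • x) = c * pairQ q x := by
  unfold pairQ; rw [Finset.mul_sum]
  exact Finset.sum_congr rfl fun i _ => by simp [Pi.smul_apply, smul_eq_mul]; ring

lemma pairQ_zero_right (q : Fin n → ℚ) : pairQ q 0 = 0 := by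
  unfold pairQ; simp

lemma pairQ_zero_left (v : Fin n → ℚ) : pairQ 0 v = 0 := by
  unfold pairQ; simp

lemma pairQ_add_left (q p v : Fin n → ℚ) : pairQ (q + p) v = pairQ q v + pairQ p v := by
  rw [pairQ_comm, pairQ_add_right, pairQ_comm v q, pairQ_comm v p]

lemma pairQ_smul_left (c : ℚ) (q v : Fin n → ℚ) : pairQ (c • q) v = c * pairQ q v := by
  rw [pairQ_comm, pairQ_smul_right, pairQ_comm]

lemma pairQ_sub_right (q x y : Fin n → ℚ) : pairQ q (x - y) = pairQ q x - pairQ q y := by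
  unfold pairQ; rw [← Finset.sum_sub_distrib]
  exact Finset.sum_congr rfl fun i _ => by simp [Pi.sub_apply, mul_sub]

lemma pairQ_self_nonneg (v : Fin n → ℚ) : 0 ≤ pairQ v v :=
  Finset.sum_nonneg fun i _ => mul_self_nonneg _

lemma eq_zero_of_pairQ_self (v : Fin n → ℚ) (h : pairQ v v = 0) : v = 0 := by
  funext i
  have := (Finset.sum_eq_zero_iff_of_nonneg (fun i _ => mul_self_nonneg (v i))).1 h i
    (Finset.mem_univ i)
  have := mul_self_eq_zero.1 this
  simpa using this

/-- If `pairQ w g = 0` for all `g ∈ C` and `C` spans, then `w = 0`. -/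
lemma eq_zero_of_pairQ_vanish {C : Set (Fin n → ℚ)} (hfull : Submodule.span ℚ C = ⊤)
    {w : Fin n → ℚ} (h : ∀ g ∈ C, pairQ w g = 0) : w = 0 := by
  let f : (Fin n → ℚ) →ₗ[ℚ] ℚ :=
    { toFun := fun x => pairQ w x
      map_add' := fun x y => pairQ_add_right w x y
      map_smul' := fun c x => by simpa using pairQ_smul_right w c x }
  have hker : Submodule.span ℚ C ≤ LinearMap.ker f := by
    rw [Submodule.span_le]; intro g hg; exact h g hg
  rw [hfull, top_le_iff] at hker
  have : f w = 0 := by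
    have : w ∈ LinearMap.ker f := by rw [hker]; trivial
    exact this
  exact eq_zero_of_pairQ_self w this

end RootSubgroups
namespace RootSubgroups

variable {n : ℕ}

/-! ### coneHull lemmas -/

/-- A set closed under the convex-cone operations. -/
def ConeClosed (T : Set (Fin n → ℚ)) : Prop :=
  (0 : Fin n → ℚ) ∈ T ∧ (∀ x ∈ T, ∀ y ∈ T, x + y ∈ T) ∧
    (∀ (c : ℚ) (x : Fin n → ℚ), 0 ≤ c → x ∈ T → c • x ∈ T)

lemma subset_coneHull (S : Set (Fin n → ℚ)) : S ⊆ coneHull S := by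
  intro v hv
  classical
  refine ⟨{v}, fun u => if u = v then 1 else 0, by simpa using hv, ?_, ?_⟩
  · intro u; by_cases h : u = v <;> simp [h]
  · simp

lemma coneHull_subset_of_coneClosed {S T : Set (Fin n → ℚ)} (hST : S ⊆ T)
    (hT : ConeClosed T) : coneHull S ⊆ T := by
  rintro x ⟨F, c, hFS, hc, rfl⟩
  refine Finset.sum_induction _ (· ∈ T) (fun a b ha hb => hT.2.1 a ha b hb) hT.1 ?_
  intro v hv
  exact hT.2.2 (c v) v (hc v) (hST (hFS hv))

lemma coneClosed_coneHull (S : Set (Fin n → ℚ)) : ConeClosed (coneHull S) := by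
  classical
  refine ⟨⟨∅, fun _ => 0, by simp, fun _ => le_refl 0, by simp⟩, ?_, ?_⟩
  · rintro x ⟨F, c, hFS, hc, rfl⟩ y ⟨G, d, hGS, hd, rfl⟩
    refine ⟨F ∪ G, fun v => (if v ∈ F then c v else 0) + (if v ∈ G then d v else 0),
      ?_, ?_, ?_⟩
    · intro v hv
      rcases Finset.mem_union.1 (by exact_mod_cast hv) with h | h
      · exact hFS h
      · exact hGS h
    · intro v
      have h1 : (0:ℚ) ≤ if v ∈ F then c v else 0 := by split; exact hc v; rfl
      have h2 : (0:ℚ) ≤ if v ∈ G then d v else 0 := by split; exact hd v; rfl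
      dsimp only
      linarith
    · have e1 : ∑ v ∈ F ∪ G, (if v ∈ F then c v else 0) • v = ∑ v ∈ F, c v • v := by
        rw [← Finset.sum_subset Finset.subset_union_left
          (fun x _ hx => by rw [if_neg hx, zero_smul])]
        exact Finset.sum_congr rfl fun v hv => by rw [if_pos hv]
      have e2 : ∑ v ∈ F ∪ G, (if v ∈ G then d v else 0) • v = ∑ v ∈ G, d v • v := by
        rw [← Finset.sum_subset Finset.subset_union_right
          (fun x _ hx => by rw [if_neg hx, zero_smul])]
        exact Finset.sum_congr rfl fun v hv => by rw [if_pos hv]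
      rw [← e1, ← e2, ← Finset.sum_add_distrib]
      exact Finset.sum_congr rfl fun v _ => by rw [add_smul]
  · rintro c₀ x hc₀ ⟨F, c, hFS, hc, rfl⟩
    refine ⟨F, fun v => c₀ * c v, hFS, fun v => mul_nonneg hc₀ (hc v), ?_⟩
    rw [Finset.smul_sum]
    exact Finset.sum_congr rfl fun v _ => by rw [smul_smul]

lemma coneClosed_dualCone (C : Set (Fin n → ℚ)) : ConeClosed (dualCone C) := by
  refine ⟨fun v _ => by rw [pairQ_zero_left], ?_, ?_⟩
  · intro x hx y hy v hv
    rw [pairQ_add_left]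
    exact add_nonneg (hx v hv) (hy v hv)
  · intro c x hc hx v hv
    rw [pairQ_smul_left]
    exact mul_nonneg hc (hx v hv)

/-- Half-space condition on a cone hull. -/
lemma pairQ_nonneg_of_mem_coneHull {S : Set (Fin n → ℚ)} {q x : Fin n → ℚ}
    (hq : ∀ v ∈ S, 0 ≤ pairQ q v) (hx : x ∈ coneHull S) : 0 ≤ pairQ q x := by
  have : coneHull S ⊆ {y | 0 ≤ pairQ q y} := by
    refine coneHull_subset_of_coneClosed hq ?_
    refine ⟨by simp [Set.mem_setOf_eq, pairQ_zero_right], ?_, ?_⟩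
    · intro a ha b hb
      simp only [Set.mem_setOf_eq, pairQ_add_right] at *
      linarith
    · intro c a hc ha
      simp only [Set.mem_setOf_eq, pairQ_smul_right] at *
      exact mul_nonneg hc ha
  exact this hx

lemma mem_dualCone_coneHull {S : Set (Fin n → ℚ)} {q : Fin n → ℚ} :
    q ∈ dualCone (coneHull S) ↔ ∀ v ∈ S, 0 ≤ pairQ q v := by
  constructor
  · intro h v hv; exact h v (subset_coneHull S hv)
  · intro h x hx; exact pairQ_nonneg_of_mem_coneHull h hx

/-- The key "transfer" lemma: if `q₁` is nonnegative on the generators, vanishing of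
`pairQ q₁` on a generator implies vanishing of `pairQ q₂`, and `pairQ q₁ x = 0` for
`x` in the cone hull, then `pairQ q₂ x = 0`. -/
lemma pairQ_transfer {S : Set (Fin n → ℚ)} {q₁ q₂ x : Fin n → ℚ}
    (h1 : ∀ v ∈ S, 0 ≤ pairQ q₁ v) (h12 : ∀ v ∈ S, pairQ q₁ v = 0 → pairQ q₂ v = 0)
    (hx : x ∈ coneHull S) (hx0 : pairQ q₁ x = 0) : pairQ q₂ x = 0 := by
  have : coneHull S ⊆ {y | 0 ≤ pairQ q₁ y ∧ (pairQ q₁ y = 0 → pairQ q₂ y = 0)} := by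
    refine coneHull_subset_of_coneClosed (fun v hv => ⟨h1 v hv, h12 v hv⟩) ?_
    refine ⟨by simp [Set.mem_setOf_eq, pairQ_zero_right], ?_, ?_⟩
    · rintro a ⟨ha1, ha2⟩ b ⟨hb1, hb2⟩
      refine ⟨by rw [pairQ_add_right]; linarith, ?_⟩
      rw [pairQ_add_right, pairQ_add_right]
      intro h
      have h1' : pairQ q₁ a = 0 := by linarith
      have h2' : pairQ q₁ b = 0 := by linarith
      rw [ha2 h1', hb2 h2', add_zero]
    · rintro c a hc ⟨ha1, ha2⟩
      refine ⟨by rw [pairQ_smul_right]; exact mul_nonneg hc ha1, ?_⟩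
      rw [pairQ_smul_right, pairQ_smul_right]
      intro h
      rcases mul_eq_zero.1 h with h | h
      · rw [h, zero_mul]
      · rw [ha2 h, mul_zero]
  exact ((this hx).2) hx0

end RootSubgroups
namespace RootSubgroups

variable {n : ℕ}

/-! ### Computation lemmas for `emb`, `alphaVec`, `wmap`, `Fin.init` -/

lemma pairQ_split (q x : Fin (n + 1) → ℚ) :
    pairQ q x = pairQ (Fin.init q) (Fin.init x) + q (Fin.last n) * x (Fin.last n) := by
  unfold pairQ
  rw [Fin.sum_univ_castSucc]
  rfl

lemma pairQ_emb (q : Fin (n + 1) → ℚ) (g : Fin n → ℚ) :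
    pairQ q (emb g) = pairQ (Fin.init q) g := by
  rw [pairQ_split]
  unfold emb
  simp [Fin.init_snoc, Fin.snoc_last]

lemma pairQ_alphaVec (q : Fin (n + 1) → ℚ) : pairQ q (alphaVec n) = q (Fin.last n) := by
  rw [pairQ_split]
  unfold alphaVec
  simp [Fin.init_snoc, Fin.snoc_last, pairQ_zero_right]

lemma pairQ_wmap (ac q x : Fin (n + 1) → ℚ) :
    pairQ q (wmap ac x) = pairQ q x - pairQ ac x * q (Fin.last n) := by
  unfold wmap
  rw [pairQ_sub_right, pairQ_smul_right, pairQ_alphaVec]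

lemma init_add (x y : Fin (n + 1) → ℚ) : Fin.init (x + y) = Fin.init x + Fin.init y := rfl

lemma init_smul (c : ℚ) (x : Fin (n + 1) → ℚ) : Fin.init (c • x) = c • Fin.init x := rfl

lemma init_zero : Fin.init (0 : Fin (n + 1) → ℚ) = 0 := rfl

lemma emb_add (x y : Fin n → ℚ) : emb (x + y) = emb x + emb y := by
  funext i
  refine Fin.lastCases ?_ ?_ i <;> unfold emb <;> simp

lemma emb_smul (c : ℚ) (x : Fin n → ℚ) : emb (c • x) = c • emb x := by
  funext i
  refine Fin.lastCases ?_ ?_ i <;> unfold emb <;> simp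

lemma emb_zero : emb (0 : Fin n → ℚ) = 0 := by
  funext i
  refine Fin.lastCases ?_ ?_ i <;> unfold emb <;> simp

lemma init_emb (g : Fin n → ℚ) : Fin.init (emb g) = g := by
  unfold emb; simp [Fin.init_snoc]

lemma emb_last (g : Fin n → ℚ) : emb g (Fin.last n) = 0 := by
  unfold emb; simp

lemma emb_init_of_last_eq_zero {q : Fin (n + 1) → ℚ} (h : q (Fin.last n) = 0) :
    emb (Fin.init q) = q := by
  unfold emb
  rw [← h]
  exact Fin.snoc_init_self q

lemma wmap_emb_last (ac : Fin (n + 1) → ℚ) (g : Fin n → ℚ) :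
    wmap ac (emb g) (Fin.last n) = -pairQ (Fin.init ac) g := by
  unfold wmap
  simp only [Pi.sub_apply, Pi.smul_apply, emb_last, smul_eq_mul]
  unfold alphaVec
  simp [Fin.snoc_last, pairQ_emb]

lemma init_wmap_emb (ac : Fin (n + 1) → ℚ) (g : Fin n → ℚ) :
    Fin.init (wmap ac (emb g)) = g := by
  funext i
  unfold wmap Fin.init
  simp only [Pi.sub_apply, Pi.smul_apply, smul_eq_mul]
  unfold alphaVec emb
  simp [Fin.snoc_castSucc]

lemma isLatticePt_emb {g : Fin n → ℚ} (h : IsLatticePt g) : IsLatticePt (emb g) := by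
  intro i
  refine Fin.lastCases ?_ ?_ i
  · exact ⟨0, by simp [emb_last]⟩
  · intro j
    rcases h j with ⟨z, hz⟩
    exact ⟨z, by unfold emb; simpa [Fin.snoc_castSucc] using hz⟩

lemma isLatticePt_init {q : Fin (n + 1) → ℚ} (h : IsLatticePt q) :
    IsLatticePt (Fin.init q) := fun i => h i.castSucc

/-- Membership in the dual of `barCone` in terms of data on `C`. -/
lemma mem_dual_barCone {ac : Fin (n + 1) → ℚ} {C : Set (Fin n → ℚ)}
    {q : Fin (n + 1) → ℚ} :
    q ∈ dualCone (barCone ac C) ↔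
      (∀ g ∈ C, 0 ≤ pairQ (Fin.init q) g) ∧
      (∀ g ∈ C, 0 ≤ pairQ (Fin.init q) g - pairQ (Fin.init ac) g * q (Fin.last n)) := by
  unfold barCone
  rw [mem_dualCone_coneHull]
  constructor
  · intro h
    constructor
    · intro g hg
      have := h (emb g) (Set.mem_union_left _ ⟨g, hg, rfl⟩)
      rwa [pairQ_emb] at this
    · intro g hg
      have := h (wmap ac (emb g)) (Set.mem_union_right _ ⟨emb g, ⟨g, hg, rfl⟩, rfl⟩)
      rwa [pairQ_wmap, pairQ_emb, pairQ_emb] at this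
  · rintro ⟨h1, h2⟩ v hv
    rcases hv with ⟨g, hg, rfl⟩ | ⟨x, ⟨g, hg, rfl⟩, rfl⟩
    · rw [pairQ_emb]; exact h1 g hg
    · rw [pairQ_wmap, pairQ_emb, pairQ_emb]; exact h2 g hg

end RootSubgroups
namespace RootSubgroups

variable {n : ℕ}

/-! ### Primitivity lemmas -/

lemma IsPrimitive.ne_zero {ρ : Fin n → ℚ} (h : IsPrimitive ρ) : ρ ≠ 0 := by
  intro h0
  have := h.2 0 0 (fun i => ⟨0, by simp⟩) (by simp [h0])
  exact absurd this (by norm_num)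

lemma isLatticePt_intComb (a b : ℤ) {x y : Fin n → ℚ} (hx : IsLatticePt x)
    (hy : IsLatticePt y) : IsLatticePt ((a : ℚ) • x + (b : ℚ) • y) := by
  intro i
  rcases hx i with ⟨zx, hzx⟩
  rcases hy i with ⟨zy, hzy⟩
  exact ⟨a * zx + b * zy, by simp [hzx, hzy]⟩

/-- Two primitive vectors spanning the same ray are equal. -/
lemma prim_eq {ρ₁ ρ₂ : Fin n → ℚ} (h₁ : IsPrimitive ρ₁) (h₂ : IsPrimitive ρ₂)
    {c : ℚ} (hc : 0 ≤ c) (h : ρ₂ = c • ρ₁) : ρ₂ = ρ₁ := by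
  have hne : ρ₂ ≠ 0 := h₂.ne_zero
  have hc0 : c ≠ 0 := by
    rintro rfl; exact hne (by simp [h])
  have hcpos : 0 < c := lt_of_le_of_ne hc (Ne.symm hc0)
  have hnum : 0 < c.num := Rat.num_pos.2 hcpos
  -- Bezout coefficients for (c.num, c.den)
  have hcop : Int.gcd c.num (c.den : ℤ) = 1 := by
    simpa [Int.gcd] using c.reduced
  have hbez := Int.gcd_eq_gcd_ab c.num (c.den : ℤ)
  rw [hcop] at hbez
  set A := Int.gcdA c.num (c.den : ℤ)
  set B := Int.gcdB c.num (c.den : ℤ)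
  -- u = A • ρ₂ + B • ρ₁ is a lattice vector with ρ₁ = c.den • u
  set u := (A : ℚ) • ρ₂ + (B : ℚ) • ρ₁ with hu
  have hulat : IsLatticePt u := isLatticePt_intComb A B h₂.1 h₁.1
  have hq : ((c.den : ℚ)) ≠ 0 := by exact_mod_cast c.den_nz
  have hcden : c * (c.den : ℚ) = (c.num : ℚ) := by
    calc c * (c.den : ℚ) = ((c.num : ℚ) / (c.den : ℚ)) * (c.den : ℚ) := by
          rw [Rat.num_div_den c]
      _ = (c.num : ℚ) := div_mul_cancel₀ _ hq
  have key : ρ₁ = ((c.den : ℕ) : ℚ) • u := by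
    rw [hu, h, smul_add, smul_smul, smul_smul, smul_smul]
    have hsc : (c.den : ℚ) * (A : ℚ) * c + (c.den : ℚ) * (B : ℚ) = 1 := by
      have h0 : ((c.num : ℚ)) * (A : ℚ) + ((c.den : ℚ)) * (B : ℚ) = 1 := by
        exact_mod_cast congrArg (fun z : ℤ => (z : ℚ)) hbez.symm
      calc (c.den : ℚ) * (A : ℚ) * c + (c.den : ℚ) * (B : ℚ)
          = (c * (c.den : ℚ)) * (A : ℚ) + (c.den : ℚ) * (B : ℚ) := by ring
        _ = (c.num : ℚ) * (A : ℚ) + (c.den : ℚ) * (B : ℚ) := by rw [hcden]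
        _ = 1 := h0
    rw [← add_smul, hsc, one_smul]
  have hden1 : c.den = 1 := h₁.2 c.den u hulat key
  have hcint : c = (c.num : ℚ) := by
    conv_lhs => rw [← Rat.num_div_den c]
    rw [hden1]; simp
  have hc2 : ρ₂ = ((c.num.toNat : ℕ) : ℚ) • ρ₁ := by
    rw [h, hcint]
    congr 1
    exact_mod_cast (Int.toNat_of_nonneg hnum.le).symm
  have : c.num.toNat = 1 := h₂.2 c.num.toNat ρ₁ h₁.1 hc2
  have : c = 1 := by
    rw [hcint]
    have : c.num = 1 := by omega
    rw [this]; norm_num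
  rw [h, this, one_smul]

/-- Bezout representation of the gcd of a finite family of integers. -/
lemma exists_gcd_rep {ι : Type*} [DecidableEq ι] (s : Finset ι) (f : ι → ℤ) :
    ∃ u : ι → ℤ, ∑ i ∈ s, u i * f i = s.gcd f := by
  classical
  induction s using Finset.induction_on with
  | empty => exact ⟨0, by simp⟩
  | insert a s ha ih =>
    rcases ih with ⟨u, hu⟩
    set g := s.gcd f
    refine ⟨fun i => if i = a then Int.gcdA (f a) g else Int.gcdB (f a) g * u i, ?_⟩
    rw [Finset.sum_insert ha]
    dsimp only
    rw [if_pos rfl]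
    have : ∑ i ∈ s, (if i = a then Int.gcdA (f a) g else Int.gcdB (f a) g * u i) * f i
        = Int.gcdB (f a) g * ∑ i ∈ s, u i * f i := by
      rw [Finset.mul_sum]
      refine Finset.sum_congr rfl fun i hi => ?_
      rw [if_neg (by rintro rfl; exact ha hi)]
      ring
    rw [this, hu, Finset.gcd_insert]
    have hab := Int.gcd_eq_gcd_ab (f a) g
    have : GCDMonoid.gcd (f a) g = (Int.gcd (f a) g : ℤ) := by
      simp [Int.coe_gcd]
    rw [this, hab]
    ring

/-- A primitive vector admits a lattice vector pairing to `1`. -/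
lemma exists_pairQ_eq_one {ρ : Fin n → ℚ} (h : IsPrimitive ρ) :
    ∃ u : Fin n → ℚ, IsLatticePt u ∧ pairQ ρ u = 1 := by
  classical
  choose z hz using h.1
  set d := Finset.univ.gcd z with hd
  have hdvd : ∀ i, d ∣ z i := fun i => Finset.gcd_dvd (Finset.mem_univ i)
  have hdnz : d ≠ 0 := by
    intro h0
    have : ∀ i, z i = 0 := by
      intro i
      have := hdvd i
      rw [h0] at this
      exact zero_dvd_iff.1 this
    exact h.ne_zero (funext fun i => by rw [hz i, this i]; simp)
  -- the natAbs of the gcd is 1 by primitivity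
  have hnat : d.natAbs = 1 := by
    set k := d.natAbs with hk
    have hkdvd : ∀ i, ((k : ℤ)) ∣ z i := fun i => (Int.natAbs_dvd).2 (hdvd i)
    set q : Fin n → ℚ := fun i => ((z i / (k : ℤ) : ℤ) : ℚ) with hqdef
    have hqlat : IsLatticePt q := fun i => ⟨z i / (k : ℤ), rfl⟩
    have : ρ = ((k : ℕ) : ℚ) • q := by
      funext i
      have : (k : ℤ) * (z i / (k : ℤ)) = z i := Int.mul_ediv_cancel' (hkdvd i)
      have := congrArg (fun t : ℤ => (t : ℚ)) this
      push_cast at this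
      simp only [hz i, Pi.smul_apply, smul_eq_mul, hqdef]
      exact this.symm
    exact h.2 k q hqlat this
  rcases exists_gcd_rep Finset.univ z with ⟨u, hu⟩
  rw [← hd] at hu
  have hd1 : d = 1 ∨ d = -1 := Int.natAbs_eq_iff.1 hnat
  rcases hd1 with hd1 | hd1
  · refine ⟨fun i => ((u i : ℤ) : ℚ), fun i => ⟨u i, rfl⟩, ?_⟩
    unfold pairQ
    have : ∑ i, ρ i * ((u i : ℤ) : ℚ) = ((∑ i, u i * z i : ℤ) : ℚ) := by
      push_cast
      exact Finset.sum_congr rfl fun i _ => by rw [hz i]; ring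
    rw [this, hu, hd1]; norm_num
  · refine ⟨fun i => ((-u i : ℤ) : ℚ), fun i => ⟨-u i, rfl⟩, ?_⟩
    unfold pairQ
    have : ∑ i, ρ i * ((-u i : ℤ) : ℚ) = ((∑ i, -(u i * z i) : ℤ) : ℚ) := by
      push_cast
      exact Finset.sum_congr rfl fun i _ => by rw [hz i]; ring
    have h2 : (∑ i, -(u i * z i)) = -∑ i, u i * z i := by
      simp
    rw [this, h2, hu, hd1]
    norm_num

end RootSubgroups
namespace RootSubgroups

variable {n : ℕ}

/-! ### E1 lemmas and finiteness -/

lemma mem_raySet_self (ρ : Fin n → ℚ) : ρ ∈ raySet ρ := ⟨1, by norm_num, by simp⟩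

lemma E1_mem_dual {C : Set (Fin n → ℚ)} {ρ : Fin n → ℚ} (h : ρ ∈ E1 C) :
    ρ ∈ dualCone C := by
  obtain ⟨v, hv, heq⟩ := h.2
  have := mem_raySet_self ρ
  rw [heq] at this
  exact this.1

lemma coneHull_mono {A B : Set (Fin n → ℚ)} (h : A ⊆ B) : coneHull A ⊆ coneHull B :=
  coneHull_subset_of_coneClosed (h.trans (subset_coneHull B)) (coneClosed_coneHull B)

lemma E1_finite (S : Finset (Fin n → ℚ)) : (E1 (coneHull (S : Set (Fin n → ℚ)))).Finite := by
  classical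
  set Φ : (Fin n → ℚ) → Finset (Fin n → ℚ) := fun ρ => S.filter (fun s => pairQ ρ s = 0)
    with hΦ
  have key : ∀ ρ₁ ∈ E1 (coneHull (S : Set (Fin n → ℚ))),
      ∀ ρ₂ ∈ E1 (coneHull (S : Set (Fin n → ℚ))), Φ ρ₁ ⊆ Φ ρ₂ → ρ₂ ∈ raySet ρ₁ := by
    intro ρ₁ h₁ ρ₂ h₂ hsub
    obtain ⟨v₁, hv₁, he₁⟩ := h₁.2
    have hρ₁d : ρ₁ ∈ dualCone (coneHull (S : Set (Fin n → ℚ))) := E1_mem_dual h₁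
    have hρ₂d : ρ₂ ∈ dualCone (coneHull (S : Set (Fin n → ℚ))) := E1_mem_dual h₂
    have hρ₁0 : pairQ ρ₁ v₁ = 0 := by
      have := mem_raySet_self ρ₁
      rw [he₁] at this
      exact this.2
    have h0 : pairQ ρ₂ v₁ = 0 := by
      refine pairQ_transfer (q₁ := ρ₁) ?_ ?_ hv₁ hρ₁0
      · intro s hs; exact hρ₁d s (subset_coneHull _ hs)
      · intro s hs h0
        have : s ∈ Φ ρ₁ := Finset.mem_filter.2 ⟨by exact_mod_cast hs, h0⟩
        exact (Finset.mem_filter.1 (hsub this)).2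
    rw [he₁]
    exact ⟨hρ₂d, h0⟩
  have inj : Set.InjOn Φ (E1 (coneHull (S : Set (Fin n → ℚ)))) := by
    intro ρ₁ h₁ ρ₂ h₂ heq
    obtain ⟨c, hc, hc2⟩ := key ρ₁ h₁ ρ₂ h₂ (le_of_eq heq)
    exact (prim_eq h₁.1 h₂.1 hc hc2).symm ▸ rfl
  have himg : (Φ '' E1 (coneHull (S : Set (Fin n → ℚ)))).Finite := by
    refine Set.Finite.subset (S.powerset.finite_toSet) ?_
    rintro T ⟨ρ, _, rfl⟩
    simp only [Finset.coe_powerset, Set.mem_preimage, Set.mem_powerset_iff,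
      Finset.coe_subset, Finset.mem_coe, Finset.mem_powerset]
    exact Finset.filter_subset _ _
  exact Set.Finite.of_finite_image himg inj

/-! ### barCone as a finitely generated cone -/

lemma wmap_add (ac x y : Fin (n + 1) → ℚ) :
    wmap ac (x + y) = wmap ac x + wmap ac y := by
  unfold wmap
  rw [pairQ_add_right, add_smul]
  abel

lemma wmap_smul (ac : Fin (n + 1) → ℚ) (c : ℚ) (x : Fin (n + 1) → ℚ) :
    wmap ac (c • x) = c • wmap ac x := by
  unfold wmap
  rw [pairQ_smul_right, smul_sub, mul_smul]

lemma wmap_zero (ac : Fin (n + 1) → ℚ) : wmap ac (0 : Fin (n + 1) → ℚ) = 0 := by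
  unfold wmap
  rw [pairQ_zero_right, zero_smul, sub_zero]

lemma barCone_eq_finset {C : Set (Fin n → ℚ)} (S : Finset (Fin n → ℚ))
    (hC : C = coneHull (S : Set (Fin n → ℚ))) (ac : Fin (n + 1) → ℚ) :
    barCone ac C =
      coneHull ((emb '' (S : Set (Fin n → ℚ))) ∪ (wmap ac ∘ emb) '' (S : Set (Fin n → ℚ))) := by
  classical
  unfold barCone
  apply Set.Subset.antisymm
  · refine coneHull_subset_of_coneClosed ?_ (coneClosed_coneHull _)
    rintro x (⟨g, hg, rfl⟩ | ⟨y, ⟨g, hg, rfl⟩, rfl⟩)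
    · -- emb g with g ∈ C
      rw [hC] at hg
      have : coneHull (S : Set (Fin n → ℚ)) ⊆
          {x | emb x ∈ coneHull ((emb '' (S : Set (Fin n → ℚ))) ∪
            (wmap ac ∘ emb) '' (S : Set (Fin n → ℚ)))} := by
        refine coneHull_subset_of_coneClosed ?_ ?_
        · intro s hs
          exact subset_coneHull _ (Set.mem_union_left _ ⟨s, hs, rfl⟩)
        · refine ⟨?_, ?_, ?_⟩
          · simp only [Set.mem_setOf_eq]
            rw [emb_zero]
            exact (coneClosed_coneHull _).1
          · intro a ha b hb
            simp only [Set.mem_setOf_eq]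
            rw [emb_add]
            exact (coneClosed_coneHull _).2.1 _ ha _ hb
          · intro c a hc ha
            simp only [Set.mem_setOf_eq]
            rw [emb_smul]
            exact (coneClosed_coneHull _).2.2 c _ hc ha
      exact this hg
    · rw [hC] at hg
      have : coneHull (S : Set (Fin n → ℚ)) ⊆
          {x | wmap ac (emb x) ∈ coneHull ((emb '' (S : Set (Fin n → ℚ))) ∪
            (wmap ac ∘ emb) '' (S : Set (Fin n → ℚ)))} := by
        refine coneHull_subset_of_coneClosed ?_ ?_
        · intro s hs
          exact subset_coneHull _ (Set.mem_union_right _ ⟨s, hs, rfl⟩)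
        · refine ⟨?_, ?_, ?_⟩
          · simp only [Set.mem_setOf_eq]
            rw [emb_zero, wmap_zero]
            exact (coneClosed_coneHull _).1
          · intro a ha b hb
            simp only [Set.mem_setOf_eq]
            rw [emb_add, wmap_add]
            exact (coneClosed_coneHull _).2.1 _ ha _ hb
          · intro c a hc ha
            simp only [Set.mem_setOf_eq]
            rw [emb_smul, wmap_smul]
            exact (coneClosed_coneHull _).2.2 c _ hc ha
      exact this hg
  · refine coneHull_mono ?_
    rintro x (⟨s, hs, rfl⟩ | ⟨s, hs, rfl⟩)
    · exact Set.mem_union_left _ ⟨s, by rw [hC]; exact subset_coneHull _ hs, rfl⟩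
    · exact Set.mem_union_right _ ⟨emb s, ⟨s, by rw [hC]; exact subset_coneHull _ hs, rfl⟩, rfl⟩

lemma E1_barCone_finite {C : Set (Fin n → ℚ)} (hfg : IsFGCone C) (ac : Fin (n + 1) → ℚ) :
    (E1 (barCone ac C)).Finite := by
  classical
  obtain ⟨S, hS⟩ := hfg
  have := barCone_eq_finset S hS ac
  rw [this]
  have : (emb '' (S : Set (Fin n → ℚ))) ∪ (wmap ac ∘ emb) '' (S : Set (Fin n → ℚ))
      = ((S.image emb ∪ S.image (wmap ac ∘ emb) : Finset (Fin (n + 1) → ℚ)) :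
          Set (Fin (n + 1) → ℚ)) := by
    simp [Finset.coe_union, Finset.coe_image]
  rw [this]
  exact E1_finite _

lemma E1_C_finite {C : Set (Fin n → ℚ)} (hfg : IsFGCone C) : (E1 C).Finite := by
  obtain ⟨S, hS⟩ := hfg
  rw [hS]
  exact E1_finite S

end RootSubgroups
namespace RootSubgroups

variable {n : ℕ}

/-! ### Separation lemma over the reals -/

/-- Coordinatewise embedding of `ℚⁿ` into `ℝⁿ`. -/
def toR (v : Fin n → ℚ) : Fin n → ℝ := fun i => ((v i : ℚ) : ℝ)

lemma pairR_cast (a b : Fin n → ℚ) :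
    ((pairQ a b : ℚ) : ℝ) = ∑ i, toR a i * toR b i := by
  unfold pairQ toR
  push_cast
  rfl

lemma toR_sub_smul (x ρ : Fin n → ℚ) (d : ℚ) :
    toR (x - d • ρ) = toR x - (d : ℝ) • toR ρ := by
  funext i
  unfold toR
  push_cast
  simp

/-- Separation: if no real convex combination of the finite set `B` lands on the line
spanned by `ρ₀`, then there is a rational vector `z` orthogonal to `ρ₀` that pairs
strictly positively with every element of `B`. -/
lemma pairQ_sub_left (q p v : Fin n → ℚ) : pairQ (q - p) v = pairQ q v - pairQ p v := by
  rw [pairQ_comm, pairQ_sub_right, pairQ_comm v q, pairQ_comm v p]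

set_option maxHeartbeats 1000000 in
lemma separation {B : Finset (Fin n → ℚ)} {ρ₀ : Fin n → ℚ} (hρ₀ : ρ₀ ≠ 0)
    (hyp : ∀ (c : (Fin n → ℚ) → ℝ) (lam : ℝ), (∀ x, 0 ≤ c x) →
      (∑ x ∈ B, c x = 1) → (∑ x ∈ B, c x • toR x) = lam • toR ρ₀ → False) :
    ∃ z : Fin n → ℚ, pairQ ρ₀ z = 0 ∧ ∀ x ∈ B, 0 < pairQ x z := by
  classical
  set Q : ℚ := pairQ ρ₀ ρ₀ with hQ
  have hQpos : 0 < Q := by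
    rcases lt_or_eq_of_le (pairQ_self_nonneg ρ₀) with h | h
    · exact h
    · exact absurd (eq_zero_of_pairQ_self ρ₀ h.symm) hρ₀
  set P : (Fin n → ℚ) → (Fin n → ℚ) := fun x => x - (pairQ ρ₀ x / Q) • ρ₀ with hP
  set φ : (Fin n → ℚ) → (Fin n → ℝ) := fun x => toR (P x) with hφ
  -- `0` is not in the convex hull of `φ '' B`
  have h0K : (0 : Fin n → ℝ) ∉ convexHull ℝ (φ '' (B : Set (Fin n → ℚ))) := by
    intro h0
    rw [convexHull_eq] at h0
    obtain ⟨ι, t, w, z, hw0, hw1, hzs, hcm⟩ := h0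
    rw [Finset.centerMass_eq_of_sum_1 _ _ hw1] at hcm
    -- choose preimages
    have hpre : ∀ i ∈ t, ∃ x ∈ B, φ x = z i := by
      intro i hi
      rcases hzs i hi with ⟨x, hx, hxe⟩
      exact ⟨x, by exact_mod_cast hx, hxe⟩
    set pre : ι → (Fin n → ℚ) := fun i =>
      if h : ∃ x ∈ B, φ x = z i then h.choose else 0 with hpre'
    have hpreB : ∀ i ∈ t, pre i ∈ B ∧ φ (pre i) = z i := by
      intro i hi
      have h := hpre i hi
      simp only [hpre', dif_pos h]
      exact ⟨h.choose_spec.1, h.choose_spec.2⟩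
    set c : (Fin n → ℚ) → ℝ := fun x =>
      ∑ i ∈ t.filter (fun i => pre i = x), w i with hc
    have hc0 : ∀ x, 0 ≤ c x := by
      intro x
      exact Finset.sum_nonneg fun i hi => hw0 i (Finset.mem_filter.1 hi).1
    have hmaps : ∀ i ∈ t, pre i ∈ B := fun i hi => (hpreB i hi).1
    have hc1 : ∑ x ∈ B, c x = 1 := by
      rw [hc]
      rw [Finset.sum_fiberwise_of_maps_to hmaps]
      exact hw1
    have hcsum : ∑ x ∈ B, c x • toR x
        = (∑ x ∈ B, c x * ((pairQ ρ₀ x / Q : ℚ) : ℝ)) • toR ρ₀ := by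
      have e0 : ∑ x ∈ B, c x • φ x = 0 := by
        have : ∀ x ∈ B, c x • φ x = ∑ i ∈ t.filter (fun i => pre i = x), w i • z i := by
          intro x hx
          rw [hc, Finset.sum_smul]
          refine Finset.sum_congr rfl fun i hi => ?_
          obtain ⟨hit, hpi⟩ := Finset.mem_filter.1 hi
          rw [← hpi, (hpreB i hit).2]
        rw [Finset.sum_congr rfl this, Finset.sum_fiberwise_of_maps_to hmaps, hcm]
      have e1 : ∀ x ∈ B, c x • φ x = c x • toR x - (c x * ((pairQ ρ₀ x / Q : ℚ) : ℝ)) • toR ρ₀ := by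
        intro x hx
        rw [hφ, hP]
        dsimp only
        rw [toR_sub_smul, smul_sub, smul_smul]
      rw [Finset.sum_congr rfl e1, Finset.sum_sub_distrib] at e0
      rw [← Finset.sum_smul] at e0
      have := sub_eq_zero.1 e0
      rw [this, Finset.sum_smul]
    exact hyp c _ hc0 hc1 hcsum
  -- separate
  have hfin : (φ '' (B : Set (Fin n → ℚ))).Finite := (B.finite_toSet).image φ
  obtain ⟨f, u, hfu, hu0⟩ := geometric_hahn_banach_closed_point
    (convex_convexHull ℝ _) (hfin.isCompact_convexHull (𝕜 := ℝ)).isClosed h0K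
  rw [map_zero] at hu0
  set ζ : Fin n → ℝ := fun i => f (fun j => if i = j then 1 else 0) with hζ
  have hfval : ∀ v : Fin n → ℝ, f v = ∑ i, v i * ζ i := by
    intro v
    conv_lhs => rw [pi_eq_sum_univ v, map_sum]
    refine Finset.sum_congr rfl fun i _ => ?_
    rw [map_smul]
    rfl
  set δ : ℝ := -u with hδ
  have hδpos : 0 < δ := by rw [hδ]; linarith
  -- bound on coordinates
  set T : ℚ := 1 + ∑ x ∈ B, ∑ i, |P x i| with hT
  have hT1 : (1 : ℚ) ≤ T := by
    rw [hT]
    have : (0:ℚ) ≤ ∑ x ∈ B, ∑ i, |P x i| :=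
      Finset.sum_nonneg fun x _ => Finset.sum_nonneg fun i _ => abs_nonneg _
    linarith
  have hTpos : (0 : ℝ) < (T : ℝ) := by exact_mod_cast lt_of_lt_of_le one_pos hT1
  set ε : ℝ := δ / (T : ℝ) with hε
  have hεpos : 0 < ε := div_pos hδpos hTpos
  -- rational approximation of -ζ
  have happrox : ∀ i, ∃ q : ℚ, |(-ζ i) - (q : ℝ)| < ε := fun i => exists_rat_near _ hεpos
  choose zq hzq using happrox
  -- the candidate vector
  refine ⟨P zq, ?_, ?_⟩
  · rw [hP]
    dsimp only
    rw [pairQ_sub_right, pairQ_smul_right, ← hQ]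
    field_simp
    ring
  · intro x hx
    have key : (0 : ℝ) < ((pairQ (P x) zq : ℚ) : ℝ) := by
      have hfx : f (φ x) < u := hfu _ (subset_convexHull ℝ _ ⟨x, by exact_mod_cast hx, rfl⟩)
      have hfx' : ∑ i, φ x i * ζ i < u := by rw [← hfval]; exact hfx
      have hbound : ∀ i, |φ x i| * |(zq i : ℝ) - (-ζ i)| ≤ |φ x i| * ε := by
        intro i
        refine mul_le_mul_of_nonneg_left ?_ (abs_nonneg _)
        rw [abs_sub_comm]
        exact (hzq i).le
      have hsum : ∑ i, φ x i * (zq i : ℝ)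
          = ∑ i, φ x i * (-ζ i) + ∑ i, φ x i * ((zq i : ℝ) - (-ζ i)) := by
        rw [← Finset.sum_add_distrib]
        exact Finset.sum_congr rfl fun i _ => by ring
      have habs : |∑ i, φ x i * ((zq i : ℝ) - (-ζ i))| ≤ (∑ i, |φ x i|) * ε := by
        calc |∑ i, φ x i * ((zq i : ℝ) - (-ζ i))| ≤ ∑ i, |φ x i * ((zq i : ℝ) - (-ζ i))| :=
              Finset.abs_sum_le_sum_abs _ _
          _ ≤ ∑ i, |φ x i| * ε := by
              refine Finset.sum_le_sum fun i _ => ?_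
              rw [abs_mul]
              exact hbound i
          _ = (∑ i, |φ x i|) * ε := by rw [Finset.sum_mul]
      have hcoord : (∑ i, |φ x i|) ≤ (T : ℝ) - 1 := by
        have h1 : ∑ i, |φ x i| = ((∑ i, |P x i| : ℚ) : ℝ) := by
          have hco : ∀ i, |φ x i| = ((|P x i| : ℚ) : ℝ) := by
            intro i
            rw [hφ]
            show |((P x i : ℚ) : ℝ)| = _
            rw [Rat.cast_abs]
          rw [Finset.sum_congr rfl (fun i _ => hco i)]
          push_cast
          rfl
        rw [h1]
        have h2 : (∑ i, |P x i| : ℚ) ≤ T - 1 := by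
          rw [hT]
          have : (∑ i, |P x i| : ℚ) ≤ ∑ y ∈ B, ∑ i, |P y i| :=
            Finset.single_le_sum (f := fun y => ∑ i, |P y i|)
              (fun y _ => Finset.sum_nonneg fun i _ => abs_nonneg _) hx
          linarith
        exact_mod_cast h2
      have hε2 : (∑ i, |φ x i|) * ε < δ := by
        calc (∑ i, |φ x i|) * ε ≤ ((T : ℝ) - 1) * ε := by
              refine mul_le_mul_of_nonneg_right hcoord hεpos.le
          _ < (T : ℝ) * ε := by
              refine mul_lt_mul_of_pos_right ?_ hεpos
              linarith
          _ = δ := by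
              rw [hε]
              field_simp
      have hmain : δ < ∑ i, φ x i * (-ζ i) := by
        have hneg : ∑ i, φ x i * (-ζ i) = -(∑ i, φ x i * ζ i) := by
          simp [mul_neg]
        rw [hneg, hδ]
        linarith
      have : ((pairQ (P x) zq : ℚ) : ℝ) = ∑ i, φ x i * (zq i : ℝ) := by
        rw [pairR_cast]
        refine Finset.sum_congr rfl fun i _ => ?_
        rfl
      rw [this, hsum]
      have := neg_abs_le (∑ i, φ x i * ((zq i : ℝ) - (-ζ i)))
      linarith
    have key2 : (0 : ℚ) < pairQ (P x) zq := by exact_mod_cast key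
    -- transfer from P x to P zq
    have identity : pairQ x (P zq) = pairQ (P x) zq := by
      rw [hP]
      dsimp only
      rw [pairQ_sub_right, pairQ_smul_right, pairQ_sub_left, pairQ_smul_left,
        pairQ_comm x ρ₀]
      ring
    rw [identity]
    exact key2

end RootSubgroups
namespace RootSubgroups

variable {n : ℕ}

/-! ### Helpers for the final assembly -/

lemma sum_smul_dot (B : Finset (Fin n → ℚ)) (c : (Fin n → ℚ) → ℝ) (g : Fin n → ℚ) :
    ∑ i, (∑ x ∈ B, c x • toR x) i * toR g i = ∑ x ∈ B, c x * ((pairQ x g : ℚ) : ℝ) := by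
  calc ∑ i, (∑ x ∈ B, c x • toR x) i * toR g i
      = ∑ i, ∑ x ∈ B, c x * toR x i * toR g i := by
        refine Finset.sum_congr rfl fun i _ => ?_
        rw [Finset.sum_apply, Finset.sum_mul]
        refine Finset.sum_congr rfl fun x _ => ?_
        simp [mul_assoc]
    _ = ∑ x ∈ B, ∑ i, c x * toR x i * toR g i := Finset.sum_comm
    _ = ∑ x ∈ B, c x * ((pairQ x g : ℚ) : ℝ) := by
        refine Finset.sum_congr rfl fun x _ => ?_
        rw [pairR_cast, Finset.mul_sum]
        exact Finset.sum_congr rfl fun i _ => by ring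

lemma smul_dot (lam : ℝ) (ρ₀ g : Fin n → ℚ) :
    ∑ i, (lam • toR ρ₀) i * toR g i = lam * ((pairQ ρ₀ g : ℚ) : ℝ) := by
  rw [pairR_cast, Finset.mul_sum]
  exact Finset.sum_congr rfl fun i _ => by simp; ring

lemma den_mul_self (q : ℚ) : q * (q.den : ℚ) = (q.num : ℚ) := by
  have hden : ((q.den : ℚ)) ≠ 0 := by exact_mod_cast q.den_nz
  have h := Rat.num_div_den q
  rw [div_eq_iff hden] at h
  linarith

lemma exists_lattice_scale (z : Fin n → ℚ) :
    ∃ m : ℕ, 0 < m ∧ IsLatticePt ((m : ℚ) • z) := by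
  classical
  refine ⟨∏ i, (z i).den, Finset.prod_pos fun i _ => (z i).pos, ?_⟩
  intro i
  have hdvd : (z i).den ∣ ∏ j, (z j).den := Finset.dvd_prod_of_mem _ (Finset.mem_univ i)
  obtain ⟨k, hk⟩ := hdvd
  refine ⟨(k : ℤ) * (z i).num, ?_⟩
  have : ((∏ j, (z j).den : ℕ) : ℚ) * z i = (k : ℚ) * ((z i) * ((z i).den : ℚ)) := by
    rw [hk]; push_cast; ring
  rw [Pi.smul_apply, smul_eq_mul, this, den_mul_self]
  push_cast
  ring

lemma exists_N_bound (B : Finset (Fin n → ℚ)) (u zl : Fin n → ℚ)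
    (h : ∀ x ∈ B, 0 < pairQ x zl) :
    ∃ N : ℕ, ∀ x ∈ B, 0 ≤ pairQ x u + (N : ℚ) * pairQ x zl := by
  classical
  induction B using Finset.induction_on with
  | empty => exact ⟨0, by simp⟩
  | insert x B ha ih =>
    obtain ⟨N₁, hN₁⟩ := ih fun y hy => h y (Finset.mem_insert_of_mem hy)
    obtain ⟨N₂, hN₂⟩ := exists_nat_ge (-pairQ x u / pairQ x zl)
    refine ⟨max N₁ N₂, ?_⟩
    intro y hy
    have hzpos : ∀ y' ∈ insert x B, 0 < pairQ y' zl := h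
    rcases Finset.mem_insert.1 hy with rfl | hyB
    · have hpz : 0 < pairQ y zl := h y (Finset.mem_insert_self y B)
      have h1 : -pairQ y u / pairQ y zl ≤ ((max N₁ N₂ : ℕ) : ℚ) := by
        refine le_trans hN₂ ?_
        exact_mod_cast Nat.le_max_right N₁ N₂
      have := (div_le_iff₀ hpz).1 h1
      linarith
    · have hpz : 0 < pairQ y zl := h y (Finset.mem_insert_of_mem hyB)
      have h1 := hN₁ y hyB
      have h2 : ((N₁ : ℕ) : ℚ) ≤ ((max N₁ N₂ : ℕ) : ℚ) := by
        exact_mod_cast Nat.le_max_left N₁ N₂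
      nlinarith

lemma isLatticePt_neg {u : Fin n → ℚ} (h : IsLatticePt u) : IsLatticePt (-u) := by
  intro i
  rcases h i with ⟨z, hz⟩
  exact ⟨-z, by simp [hz]⟩

lemma isLatticePt_add {u w : Fin n → ℚ} (hu : IsLatticePt u) (hw : IsLatticePt w) :
    IsLatticePt (u + w) := by
  intro i
  rcases hu i with ⟨z, hz⟩
  rcases hw i with ⟨y, hy⟩
  exact ⟨z + y, by simp [hz, hy]⟩

lemma isLatticePt_natsmul (N : ℕ) {w : Fin n → ℚ} (hw : IsLatticePt w) :
    IsLatticePt ((N : ℚ) • w) := by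
  intro i
  rcases hw i with ⟨z, hz⟩
  exact ⟨N * z, by rw [Pi.smul_apply, smul_eq_mul, hz]; push_cast; ring⟩

end RootSubgroups
namespace RootSubgroups

set_option maxHeartbeats 1000000 in
theorem demRootsAt_aux {n : ℕ} (hn : 1 ≤ n)
    (C : Set (Fin n → ℚ)) (hfg : IsFGCone C) (hfull : Submodule.span ℚ C = ⊤)
    (ac : Fin (n + 1) → ℚ) (hacL : IsLatticePt ac)
    (haca : pairQ ac (alphaVec n) = 2)
    (hnn : ∀ v ∈ C, 0 ≤ pairQ ac (emb v))
    (hnz : ∃ v ∈ C, pairQ ac (emb v) ≠ 0)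
    (ρ : Fin (n + 1) → ℚ) (hρ : ρ ∈ E1 (barCone ac C))
    (hρα : pairQ ρ (alphaVec n) = 0) :
    ∃ e : Fin (n + 1) → ℚ, e ∈ DemRootsAt (barCone ac C) ρ ∧
      (∃ e' : Fin n → ℚ, e = emb e' ∧ e' ∈ DemRoots C) ∧
      0 ≤ pairQ ac e := by
  classical
  have hprim : IsPrimitive ρ := hρ.1
  obtain ⟨vb, hvbmem, hface⟩ := hρ.2
  -- notation
  have hρlast : ρ (Fin.last n) = 0 := by rw [← pairQ_alphaVec ρ]; exact hρα
  have hρemb : emb (Fin.init ρ) = ρ := emb_init_of_last_eq_zero hρlast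
  have hρdual : ρ ∈ dualCone (barCone ac C) := E1_mem_dual hρ
  have hρbar := mem_dual_barCone.1 hρdual
  have hρ₀dualC : Fin.init ρ ∈ dualCone C := fun g hg => hρbar.1 g hg
  have hρvb : pairQ ρ vb = 0 := by
    have h := mem_raySet_self ρ
    rw [hface] at h
    exact h.2
  have hρpair : ∀ x : Fin (n + 1) → ℚ, pairQ ρ x = pairQ (Fin.init ρ) (Fin.init x) := by
    intro x
    rw [pairQ_split, hρlast, zero_mul, add_zero]
  have hρ₀v : pairQ (Fin.init ρ) (Fin.init vb) = 0 := by
    rw [← hρpair vb]; exact hρvb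
  have haC : ∀ g ∈ C, 0 ≤ pairQ (Fin.init ac) g := by
    intro g hg
    have := hnn g hg
    rwa [pairQ_emb] at this
  have ha_dual : Fin.init ac ∈ dualCone C := fun g hg => haC g hg
  -- C is cone closed, and the projection of barCone lies in C
  have hCcc : ConeClosed C := by
    obtain ⟨S, hS⟩ := hfg
    rw [hS]
    exact coneClosed_coneHull _
  have hproj : ∀ x ∈ barCone ac C, Fin.init x ∈ C := by
    intro x hx
    have : barCone ac C ⊆ {y | Fin.init y ∈ C} := by
      refine coneHull_subset_of_coneClosed ?_ ?_
      · rintro y (⟨g, hg, rfl⟩ | ⟨y', ⟨g, hg, rfl⟩, rfl⟩)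
        · simpa [Set.mem_setOf_eq, init_emb] using hg
        · simpa [Set.mem_setOf_eq, init_wmap_emb] using hg
      · refine ⟨?_, ?_, ?_⟩
        · simpa [Set.mem_setOf_eq, init_zero] using hCcc.1
        · intro p hp q hq
          simp only [Set.mem_setOf_eq, init_add] at *
          exact hCcc.2.1 _ hp _ hq
        · intro c p hc hp
          simp only [Set.mem_setOf_eq, init_smul] at *
          exact hCcc.2.2 c _ hc hp
    exact this hx
  have hv : Fin.init vb ∈ C := hproj vb hvbmem
  -- every element of barCone has nonpositive last coordinate
  have hlast_le : ∀ x ∈ barCone ac C, x (Fin.last n) ≤ 0 := by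
    intro x hx
    have : barCone ac C ⊆ {y | y (Fin.last n) ≤ 0} := by
      refine coneHull_subset_of_coneClosed ?_ ?_
      · rintro y (⟨g, hg, rfl⟩ | ⟨y', ⟨g, hg, rfl⟩, rfl⟩)
        · simp [Set.mem_setOf_eq, emb_last]
        · simp only [Set.mem_setOf_eq, wmap_emb_last]
          have := haC g hg
          linarith
      · refine ⟨by simp, ?_, ?_⟩
        · intro p hp q hq
          simp only [Set.mem_setOf_eq, Pi.add_apply] at *
          linarith
        · intro c p hc hp
          simp only [Set.mem_setOf_eq, Pi.smul_apply, smul_eq_mul] at *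
          exact mul_nonpos_of_nonneg_of_nonpos hc hp
    exact this hx
  have hs_le : vb (Fin.last n) ≤ 0 := hlast_le vb hvbmem
  -- ρ₀ is primitive
  have hρ₀prim : IsPrimitive (Fin.init ρ) := by
    refine ⟨isLatticePt_init hprim.1, ?_⟩
    intro k q hq hkq
    refine hprim.2 k (emb q) (isLatticePt_emb hq) ?_
    rw [← hρemb, hkq, emb_smul]
  have hρ₀ne : Fin.init ρ ≠ 0 := hρ₀prim.ne_zero
  -- the face of ρ₀ in the dual of C
  have hsnoc_mem : ∀ (q : Fin n → ℚ) (t : ℚ), q ∈ dualCone C →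
      (∀ g ∈ C, 0 ≤ pairQ q g - pairQ (Fin.init ac) g * t) →
      Fin.snoc q t ∈ dualCone (barCone ac C) := by
    intro q t hq hqt
    refine mem_dual_barCone.2 ⟨?_, ?_⟩
    · intro g hg
      rw [Fin.init_snoc]
      exact hq g hg
    · intro g hg
      rw [Fin.init_snoc, Fin.snoc_last]
      exact hqt g hg
  have hface₀ : raySet (Fin.init ρ) = {q ∈ dualCone C | pairQ q (Fin.init vb) = 0} := by
    ext q
    constructor
    · rintro ⟨c, hc, rfl⟩
      refine ⟨(coneClosed_dualCone C).2.2 c _ hc hρ₀dualC, ?_⟩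
      rw [pairQ_smul_left, hρ₀v, mul_zero]
    · rintro ⟨hqd, hqv⟩
      have hqbar : emb q ∈ dualCone (barCone ac C) := by
        have := hsnoc_mem q 0 hqd (by intro g hg; rw [mul_zero, sub_zero]; exact hqd g hg)
        exact this
      have hqvb : pairQ (emb q) vb = 0 := by
        rw [pairQ_split, init_emb, emb_last, zero_mul, add_zero]
        exact hqv
      have : emb q ∈ raySet ρ := by rw [hface]; exact ⟨hqbar, hqvb⟩
      obtain ⟨c, hc, hcq⟩ := this
      refine ⟨c, hc, ?_⟩
      have : q = Fin.init (emb q) := (init_emb q).symm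
      rw [this, hcq, ← hρemb, ← emb_smul, init_emb, init_emb]
  have hρ₀E1 : Fin.init ρ ∈ E1 C := ⟨hρ₀prim, Fin.init vb, hv, hface₀⟩
  -- the last coordinate of vb is strictly negative
  have hs_neg : vb (Fin.last n) < 0 := by
    rcases lt_or_eq_of_le hs_le with h | h
    · exact h
    · exfalso
      have hmem : Fin.snoc (Fin.init ρ) (-1 : ℚ) ∈ dualCone (barCone ac C) := by
        refine hsnoc_mem _ _ hρ₀dualC ?_
        intro g hg
        have h1 := hρ₀dualC g hg
        have h2 := haC g hg
        nlinarith
      have hpvb : pairQ (Fin.snoc (Fin.init ρ) (-1 : ℚ)) vb = 0 := by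
        rw [pairQ_split, Fin.init_snoc, Fin.snoc_last, hρ₀v, h]
        ring
      have : Fin.snoc (Fin.init ρ) (-1 : ℚ) ∈ raySet ρ := by rw [hface]; exact ⟨hmem, hpvb⟩
      obtain ⟨c, hc, hcq⟩ := this
      have := congrFun hcq (Fin.last n)
      rw [Fin.snoc_last] at this
      simp only [Pi.smul_apply, smul_eq_mul, hρlast, mul_zero] at this
      norm_num at this
  -- `a` is not on the ray of ρ₀
  have hanot : Fin.init ac ∉ raySet (Fin.init ρ) := by
    rintro ⟨c, hc, hceq⟩
    rcases eq_or_lt_of_le hc with h | hcpos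
    · have hazero : Fin.init ac = 0 := by rw [hceq, ← h, zero_smul]
      obtain ⟨g, hg, hne⟩ := hnz
      apply hne
      rw [pairQ_emb, hazero, pairQ_zero_left]
    · have hmem : Fin.snoc (Fin.init ρ) c⁻¹ ∈ dualCone (barCone ac C) := by
        refine hsnoc_mem _ _ hρ₀dualC ?_
        intro g hg
        have : pairQ (Fin.init ac) g = c * pairQ (Fin.init ρ) g := by
          rw [hceq, pairQ_smul_left]
        rw [this]
        have hcne : c ≠ 0 := ne_of_gt hcpos
        field_simp
        norm_num
      have hge : 0 ≤ pairQ (Fin.snoc (Fin.init ρ) c⁻¹) vb := hmem vb hvbmem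
      rw [pairQ_split, Fin.init_snoc, Fin.snoc_last, hρ₀v, zero_add] at hge
      have : c⁻¹ * vb (Fin.last n) < 0 :=
        mul_neg_of_pos_of_neg (inv_pos.2 hcpos) hs_neg
      linarith
  -- rays of E1 C other than ρ₀ are not on the ray of ρ₀
  have hE1not : ∀ σ ∈ E1 C, σ ≠ Fin.init ρ → σ ∉ raySet (Fin.init ρ) := by
    intro σ hσ hne hmem
    obtain ⟨c, hc, hceq⟩ := hmem
    exact hne (prim_eq hρ₀prim hσ.1 hc hceq)
  -- rays of E1 (barCone) other than ρ, with nonzero projection, project off the ray of ρ₀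
  have hbig : ∀ ρ' ∈ E1 (barCone ac C), ρ' ≠ ρ → Fin.init ρ' ≠ 0 →
      Fin.init ρ' ∉ raySet (Fin.init ρ) := by
    intro ρ' hρ' hne hne0 hmem
    obtain ⟨μ, hμ, hμeq⟩ := hmem
    have hμpos : 0 < μ := by
      rcases eq_or_lt_of_le hμ with h | h
      · exact absurd (by rw [hμeq, ← h, zero_smul]) hne0
      · exact h
    have hρ'dual : ρ' ∈ dualCone (barCone ac C) := E1_mem_dual hρ'
    have hρ'pair : ∀ x : Fin (n + 1) → ℚ, pairQ ρ' x
        = μ * pairQ (Fin.init ρ) (Fin.init x) + ρ' (Fin.last n) * x (Fin.last n) := by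
      intro x
      rw [pairQ_split, hμeq, pairQ_smul_left]
    have hts : 0 ≤ ρ' (Fin.last n) * vb (Fin.last n) := by
      have h0 := hρ'dual vb hvbmem
      rw [hρ'pair vb, hρ₀v, mul_zero, zero_add] at h0
      exact h0
    have ht_le : ρ' (Fin.last n) ≤ 0 := by
      by_contra h
      push_neg at h
      nlinarith
    have ht_ne : ρ' (Fin.last n) ≠ 0 := by
      intro h0
      have hpvb : pairQ ρ' vb = 0 := by
        rw [hρ'pair vb, hρ₀v, h0, mul_zero, zero_mul, add_zero]
      have : ρ' ∈ raySet ρ := by rw [hface]; exact ⟨hρ'dual, hpvb⟩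
      obtain ⟨c, hc, hceq⟩ := this
      exact hne (prim_eq hprim hρ'.1 hc hceq)
    have ht_neg : ρ' (Fin.last n) < 0 := lt_of_le_of_ne ht_le ht_ne
    -- the face of ρ' also kills ρ
    obtain ⟨vb', hvb'mem, hface'⟩ := hρ'.2
    have hρ'vb' : pairQ ρ' vb' = 0 := by
      have h := mem_raySet_self ρ'
      rw [hface'] at h
      exact h.2
    have hρvb' : pairQ ρ vb' = 0 := by
      refine pairQ_transfer (S := emb '' C ∪ wmap ac '' (emb '' C)) (q₁ := ρ')
        ?_ ?_ hvb'mem hρ'vb'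
      · intro y hy
        exact hρ'dual y (subset_coneHull _ hy)
      · rintro y (⟨g, hg, rfl⟩ | ⟨y', ⟨g, hg, rfl⟩, rfl⟩)
        · intro h0
          rw [pairQ_emb] at h0 ⊢
          rw [hμeq, pairQ_smul_left] at h0
          have : pairQ (Fin.init ρ) g = 0 := by
            rcases mul_eq_zero.1 h0 with h | h
            · exact absurd h (ne_of_gt hμpos)
            · exact h
          exact this
        · intro h0
          rw [pairQ_wmap, pairQ_emb, pairQ_emb] at h0 ⊢
          rw [hμeq, pairQ_smul_left] at h0
          have h1 : 0 ≤ μ * pairQ (Fin.init ρ) g := by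
            have := hρ₀dualC g hg
            positivity
          have h2 : 0 ≤ -(pairQ (Fin.init ac) g * ρ' (Fin.last n)) := by
            have := haC g hg
            nlinarith
          have h3 : pairQ (Fin.init ρ) g = 0 := by
            have : μ * pairQ (Fin.init ρ) g = 0 := by linarith
            rcases mul_eq_zero.1 this with h | h
            · exact absurd h (ne_of_gt hμpos)
            · exact h
          rw [h3, hρlast, mul_zero, sub_zero]
    have : ρ ∈ raySet ρ' := by
      rw [hface']
      exact ⟨hρdual, hρvb'⟩
    obtain ⟨c, hc, hceq⟩ := this
    have := congrFun hceq (Fin.last n)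
    rw [hρlast] at this
    simp only [Pi.smul_apply, smul_eq_mul] at this
    rcases mul_eq_zero.1 this.symm with h | h
    · -- c = 0, so ρ = 0
      rw [h, zero_smul] at hceq
      exact hprim.ne_zero hceq
    · exact ht_ne h
  -- assemble the finite set B
  have hfin1 : (E1 C).Finite := E1_C_finite hfg
  have hfin2 : (E1 (barCone ac C)).Finite := E1_barCone_finite hfg ac
  set B : Finset (Fin n → ℚ) := insert (Fin.init ac)
    ((hfin1.toFinset.erase (Fin.init ρ)) ∪
      (((hfin2.toFinset.erase ρ).image Fin.init).erase 0)) with hB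
  have hBprop : ∀ x ∈ B, x ∈ dualCone C ∧ x ∉ raySet (Fin.init ρ) := by
    intro x hx
    rw [hB] at hx
    rcases Finset.mem_insert.1 hx with rfl | hx
    · exact ⟨ha_dual, hanot⟩
    rcases Finset.mem_union.1 hx with hx | hx
    · obtain ⟨hxne, hxE⟩ := Finset.mem_erase.1 hx
      have hxE1 : x ∈ E1 C := hfin1.mem_toFinset.1 hxE
      exact ⟨E1_mem_dual hxE1, hE1not x hxE1 hxne⟩
    · obtain ⟨hxne, hxim⟩ := Finset.mem_erase.1 hx
      obtain ⟨ρ', hρ'er, rfl⟩ := Finset.mem_image.1 hxim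
      obtain ⟨hρ'ne, hρ'E⟩ := Finset.mem_erase.1 hρ'er
      have hρ'E1 : ρ' ∈ E1 (barCone ac C) := hfin2.mem_toFinset.1 hρ'E
      have hd : Fin.init ρ' ∈ dualCone C :=
        fun g hg => (mem_dual_barCone.1 (E1_mem_dual hρ'E1)).1 g hg
      exact ⟨hd, hbig ρ' hρ'E1 hρ'ne hxne⟩
  -- separation hypothesis
  have hyp : ∀ (c : (Fin n → ℚ) → ℝ) (lam : ℝ), (∀ x, 0 ≤ c x) →
      (∑ x ∈ B, c x = 1) → (∑ x ∈ B, c x • toR x) = lam • toR (Fin.init ρ) → False := by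
    intro c lam hc0 hc1 heq
    have hdot : ∀ g : Fin n → ℚ, ∑ x ∈ B, c x * ((pairQ x g : ℚ) : ℝ)
        = lam * ((pairQ (Fin.init ρ) g : ℚ) : ℝ) := by
      intro g
      have := congrArg (fun w : Fin n → ℝ => ∑ i, w i * toR g i) heq
      rw [sum_smul_dot, smul_dot] at this
      exact this
    rcases lt_or_ge lam 0 with hlam | hlam
    · -- lam < 0 : ρ₀ vanishes on C
      have hvan : ∀ g ∈ C, pairQ (Fin.init ρ) g = 0 := by
        intro g hg
        have hd := hdot g
        have hterms : ∀ x ∈ B, 0 ≤ c x * ((pairQ x g : ℚ) : ℝ) := by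
          intro x hx
          have := (hBprop x hx).1 g hg
          have hcast : (0:ℝ) ≤ ((pairQ x g : ℚ) : ℝ) := by exact_mod_cast this
          exact mul_nonneg (hc0 x) hcast
        have hLHS : 0 ≤ lam * ((pairQ (Fin.init ρ) g : ℚ) : ℝ) := by
          rw [← hd]
          exact Finset.sum_nonneg hterms
        have hp : (0:ℝ) ≤ ((pairQ (Fin.init ρ) g : ℚ) : ℝ) := by
          exact_mod_cast hρ₀dualC g hg
        have : ((pairQ (Fin.init ρ) g : ℚ) : ℝ) = 0 := by nlinarith
        exact_mod_cast this
      exact hρ₀ne (eq_zero_of_pairQ_vanish hfull hvan)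
    · -- lam ≥ 0 : some generator of the combination lies on the ray of ρ₀
      have hd := hdot (Fin.init vb)
      rw [hρ₀v] at hd
      norm_num at hd
      have hterms : ∀ x ∈ B, 0 ≤ c x * ((pairQ x (Fin.init vb) : ℚ) : ℝ) := by
        intro x hx
        have := (hBprop x hx).1 (Fin.init vb) hv
        have hcast : (0:ℝ) ≤ ((pairQ x (Fin.init vb) : ℚ) : ℝ) := by exact_mod_cast this
        exact mul_nonneg (hc0 x) hcast
      have hzero : ∀ x ∈ B, c x * ((pairQ x (Fin.init vb) : ℚ) : ℝ) = 0 :=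
        (Finset.sum_eq_zero_iff_of_nonneg hterms).1 hd
      have hex : ∃ x ∈ B, c x ≠ 0 := by
        by_contra h
        push_neg at h
        rw [Finset.sum_congr rfl (fun x hx => h x hx)] at hc1
        simp at hc1
      obtain ⟨x₀, hx₀B, hx₀⟩ := hex
      have : ((pairQ x₀ (Fin.init vb) : ℚ) : ℝ) = 0 := by
        rcases mul_eq_zero.1 (hzero x₀ hx₀B) with h | h
        · exact absurd h hx₀
        · exact h
      have hx₀v : pairQ x₀ (Fin.init vb) = 0 := by exact_mod_cast this
      have : x₀ ∈ raySet (Fin.init ρ) := by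
        rw [hface₀]
        exact ⟨(hBprop x₀ hx₀B).1, hx₀v⟩
      exact (hBprop x₀ hx₀B).2 this
  -- separation gives z
  obtain ⟨z, hz0, hzpos⟩ := separation hρ₀ne hyp
  -- scale z to a lattice vector
  obtain ⟨m, hm, hmlat⟩ := exists_lattice_scale z
  set zl : Fin n → ℚ := (m : ℚ) • z with hzl
  have hzl0 : pairQ (Fin.init ρ) zl = 0 := by
    rw [hzl, pairQ_smul_right, hz0, mul_zero]
  have hzlpos : ∀ x ∈ B, 0 < pairQ x zl := by
    intro x hx
    rw [hzl, pairQ_smul_right]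
    have : (0:ℚ) < (m:ℚ) := by exact_mod_cast hm
    exact mul_pos this (hzpos x hx)
  -- lattice vector u with ⟨ρ₀, u⟩ = -1
  obtain ⟨u₁, hu₁lat, hu₁⟩ := exists_pairQ_eq_one hρ₀prim
  have hulat : IsLatticePt (-u₁) := isLatticePt_neg hu₁lat
  have hu : pairQ (Fin.init ρ) (-u₁) = -1 := by
    have : -u₁ = (-1 : ℚ) • u₁ := by funext i; simp
    rw [this, pairQ_smul_right, hu₁]
    ring
  -- choose N
  obtain ⟨N, hN⟩ := exists_N_bound B (-u₁) zl hzlpos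
  set e' : Fin n → ℚ := -u₁ + (N : ℚ) • zl with he'
  have he'lat : IsLatticePt e' := isLatticePt_add hulat (isLatticePt_natsmul N hmlat)
  have he'ρ₀ : pairQ (Fin.init ρ) e' = -1 := by
    rw [he', pairQ_add_right, pairQ_smul_right, hu, hzl0, mul_zero, add_zero]
  have he'B : ∀ x ∈ B, 0 ≤ pairQ x e' := by
    intro x hx
    rw [he', pairQ_add_right, pairQ_smul_right]
    exact hN x hx
  -- memberships in B
  have haB : Fin.init ac ∈ B := by rw [hB]; exact Finset.mem_insert_self _ _
  have hσB : ∀ σ ∈ E1 C, σ ≠ Fin.init ρ → σ ∈ B := by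
    intro σ hσ hne
    rw [hB]
    refine Finset.mem_insert.2 (Or.inr (Finset.mem_union.2 (Or.inl ?_)))
    exact Finset.mem_erase.2 ⟨hne, hfin1.mem_toFinset.2 hσ⟩
  have hρ'B : ∀ ρ' ∈ E1 (barCone ac C), ρ' ≠ ρ → Fin.init ρ' ≠ 0 → Fin.init ρ' ∈ B := by
    intro ρ' hρ' hne hne0
    rw [hB]
    refine Finset.mem_insert.2 (Or.inr (Finset.mem_union.2 (Or.inr ?_)))
    refine Finset.mem_erase.2 ⟨hne0, Finset.mem_image.2 ⟨ρ', ?_, rfl⟩⟩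
    exact Finset.mem_erase.2 ⟨hne, hfin2.mem_toFinset.2 hρ'⟩
  -- the answer
  refine ⟨emb e', ⟨isLatticePt_emb he'lat, ?_, ?_⟩, ⟨e', rfl, ?_⟩, ?_⟩
  · rw [pairQ_emb]
    exact he'ρ₀
  · intro ρ' hρ' hne
    rw [pairQ_emb]
    by_cases h0 : Fin.init ρ' = 0
    · rw [h0, pairQ_zero_left]
    · exact he'B _ (hρ'B ρ' hρ' hne h0)
  · -- e' ∈ DemRoots C
    refine Set.mem_biUnion hρ₀E1 ?_
    refine ⟨he'lat, he'ρ₀, ?_⟩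
    intro σ hσ hne
    exact he'B σ (hσB σ hσ hne)
  · rw [pairQ_emb]
    exact he'B _ haB

end RootSubgroups

namespace RootSubgroups

/-- For every `ρ ∈ ℰ̄¹` with `⟨ρ, α⟩ = 0`, the set
`ℜ_ρ(ℰ̄) ∩ ℜ(ℰ) ∩ {e ∈ M̄ : α^∨(e) ≥ 0}` is nonempty, where `ℰ = 𝒢^∨` and
elements of `ℜ(ℰ) ⊆ M` are viewed inside `M̄` via the embedding. -/
theorem demRootsAt_barCone_inter_nonempty {n : ℕ} (hn : 1 ≤ n)
    (C : Set (Fin n → ℚ)) (hfg : IsFGCone C) (hfull : Submodule.span ℚ C = ⊤)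
    (ac : Fin (n + 1) → ℚ) (hacL : IsLatticePt ac)
    (haca : pairQ ac (alphaVec n) = 2)
    (hnn : ∀ v ∈ C, 0 ≤ pairQ ac (emb v))
    (hnz : ∃ v ∈ C, pairQ ac (emb v) ≠ 0)
    (ρ : Fin (n + 1) → ℚ) (hρ : ρ ∈ E1 (barCone ac C))
    (hρα : pairQ ρ (alphaVec n) = 0) :
    ∃ e : Fin (n + 1) → ℚ, e ∈ DemRootsAt (barCone ac C) ρ ∧
      (∃ e' : Fin n → ℚ, e = emb e' ∧ e' ∈ DemRoots C) ∧
      0 ≤ pairQ ac e := by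
  exact demRootsAt_aux hn C hfg hfull ac hacL haca hnn hnz ρ hρ hρα

end RootSubgroups
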